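/- arXiv:2210.04978 — 3 statements merged into one kernel-verified Lean document; each statement's English description precedes it below -/
import Mathlib

section
/- A compact Hausdorff space is discrete homogeneous if and only if it is n-homogeneous for every positive integer n. -/
/-! In a compact space a set whose points are separated as in `IsDiscreteSubset` is finite, by a
finite subcover, and in a T1 space every finite set is of this kind. So both sides say that any
two finite sets of equal size are exchanged by a homeomorphism (the empty case being trivial). -/

def IsDiscreteSubset {X : Type*} [TopologicalSpace X] (A : Set X) : Prop :=
  ∀ x : X, ∃ U ∈ nhds x, (U ∩ A).Subsingleton

def DiscreteHomogeneous (X : Type*) [TopologicalSpace X] : Prop :=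
  ∀ A B : Set X, IsDiscreteSubset A → IsDiscreteSubset B →
    Nonempty (A ≃ B) → ∃ h : X ≃ₜ X, h '' A = B

/-- A space is `n`-homogeneous if any two `n`-element subsets are mapped onto
each other by some self-homeomorphism. -/
def NHomogeneous (X : Type*) [TopologicalSpace X] (n : ℕ) : Prop :=
  ∀ A B : Set X, A.ncard = n → B.ncard = n → ∃ h : X ≃ₜ X, h '' A = B

lemma Set.Finite.nonempty_equiv_iff_ncard_eq {α : Type*} {s t : Set α} (hs : s.Finite)
    (ht : t.Finite) : Nonempty (s ≃ t) ↔ s.ncard = t.ncard := by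
  have := hs.to_subtype
  have := ht.to_subtype
  rw [← Finite.card_eq, Nat.card_coe_set_eq, Nat.card_coe_set_eq]

section

variable {X : Type*} [TopologicalSpace X] {A B : Set X}

lemma Set.Finite.isDiscreteSubset [T1Space X] (hA : A.Finite) : IsDiscreteSubset A := by
  intro x
  refine ⟨(A \ {x})ᶜ, hA.sdiff.isClosed.isOpen_compl.mem_nhds (by simp), ?_⟩
  rintro y ⟨hyA, hy⟩ z ⟨hzA, hz⟩
  simp only [Set.mem_compl_iff, Set.mem_sdiff, Set.mem_singleton_iff, not_and, not_not] at hyA hzA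
  rw [hyA hy, hzA hz]

lemma IsDiscreteSubset.finite [CompactSpace X] (hA : IsDiscreteSubset A) : A.Finite := by
  choose U hU hUA using hA
  obtain ⟨t, -, hcover⟩ := isCompact_univ.elim_nhds_subcover U fun x _ => hU x
  have hA_sub : A ⊆ ⋃ x ∈ t, U x ∩ A := fun a ha => by
    obtain ⟨x, hx, hax⟩ := Set.mem_iUnion₂.mp (hcover (Set.mem_univ a))
    exact Set.mem_iUnion₂.mpr ⟨x, hx, hax, ha⟩
  exact (t.finite_toSet.biUnion fun x _ => (hUA x).finite).subset hA_sub

lemma isDiscreteSubset_iff_finite [CompactSpace X] [T1Space X] :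
    IsDiscreteSubset A ↔ A.Finite :=
  ⟨IsDiscreteSubset.finite, Set.Finite.isDiscreteSubset⟩

lemma discreteHomogeneous_iff_of_compactSpace [CompactSpace X] [T1Space X] :
    DiscreteHomogeneous X ↔ ∀ A B : Set X, A.Finite → B.Finite → A.ncard = B.ncard →
      ∃ h : X ≃ₜ X, h '' A = B := by
  simp only [DiscreteHomogeneous, isDiscreteSubset_iff_finite]
  refine forall₂_congr fun A B => forall₂_congr fun hA hB => ?_
  rw [hA.nonempty_equiv_iff_ncard_eq hB]

lemma forall_nHomogeneous_iff :
    (∀ n : ℕ, 0 < n → NHomogeneous X n) ↔ ∀ A B : Set X, A.Finite → B.Finite →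
      A.ncard = B.ncard → ∃ h : X ≃ₜ X, h '' A = B := by
  refine ⟨fun H A B hA hB hAB => ?_, fun H n hn A B hA hB => ?_⟩
  · rcases Nat.eq_zero_or_pos A.ncard with h0 | hpos
    · have hA0 : A = ∅ := (Set.ncard_eq_zero hA).mp h0
      have hB0 : B = ∅ := (Set.ncard_eq_zero hB).mp (hAB ▸ h0)
      exact ⟨Homeomorph.refl X, by simp [hA0, hB0]⟩
    · exact H _ hpos A B rfl hAB.symm
  · exact H A B (Set.finite_of_ncard_pos (hA ▸ hn)) (Set.finite_of_ncard_pos (hB ▸ hn))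
      (hA.trans hB.symm)

end

theorem compact_discreteHomogeneous_iff_nHomogeneous
    (X : Type*) [TopologicalSpace X] [CompactSpace X] [T2Space X] :
    DiscreteHomogeneous X ↔ ∀ n : ℕ, 0 < n → NHomogeneous X n := by
  rw [discreteHomogeneous_iff_of_compactSpace, forall_nHomogeneous_iff]
end

section
/- If a generalized continuum X has more than one end, then X is not discrete homogeneous. -/
def IsComponentOf {X : Type*} [TopologicalSpace X] (C S : Set X) : Prop :=
  ∃ x ∈ S, C = connectedComponentIn S x

def IsEnd {X : Type*} [TopologicalSpace X] (K : ℕ → Set X) (Y : ℕ → Set X) : Prop :=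
  ∀ n, (Y n).Nonempty ∧ IsComponentOf (Y n) (K n)ᶜ ∧ Y (n + 1) ⊆ Y n

/-!
Let `Y ≠ Z` be two ends; they differ at some level `m`, where `Y m` and `Z m` are disjoint
components of the complement of the compact set `K m`. Choose sequences `a n ∈ Y n` and
`c n ∈ Z n`; both escape to infinity, so `A = range a` and `B = range a ∪ range c` are countably
infinite closed discrete sets. `A` converges to a single end: outside any compact set all but
finitely many of its points lie in one connected set. This property is preserved by
homeomorphisms, but `B` fails it, since a connected set outside `K m` cannot meet both `Y m`
and `Z m`. Hence no homeomorphism carries `A` onto `B`.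
-/

open Set Filter Topology

section

variable {X : Type*} [TopologicalSpace X]

/-- `S` accumulates at a single end of `X`. -/
def IsOneEnded (S : Set X) : Prop :=
  ∀ C : Set X, IsCompact C → ∃ T : Set X, IsPreconnected T ∧ T ⊆ Cᶜ ∧ (S \ T).Finite

theorem IsOneEnded.image {Y : Type*} [TopologicalSpace Y] {S : Set X} (hS : IsOneEnded S)
    (h : X ≃ₜ Y) : IsOneEnded (h '' S) := by
  intro C hC
  obtain ⟨T, hT, hTC, hST⟩ := hS (h.symm '' C) (hC.image h.symm.continuous)
  refine ⟨h '' T, hT.image h h.continuous.continuousOn, ?_, ?_⟩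
  · rintro _ ⟨t, ht, rfl⟩ htC
    exact hTC ht ⟨h t, htC, h.symm_apply_apply t⟩
  · rw [← image_sdiff h.injective]
    exact hST.image h

theorem isDiscreteSubset_of_finite_inter_isCompact [T1Space X] [WeaklyLocallyCompactSpace X]
    {S : Set X} (hS : ∀ C, IsCompact C → (S ∩ C).Finite) : IsDiscreteSubset S := by
  intro x
  obtain ⟨C, hC, hCx⟩ := exists_compact_mem_nhds x
  set F := (S ∩ C) \ {x}
  have hF : IsClosed F := (hS C hC).sdiff.isClosed
  refine ⟨C \ F, inter_mem hCx (hF.isOpen_compl.mem_nhds fun hx => hx.2 rfl), ?_⟩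
  refine subsingleton_of_subset_singleton (a := x) fun y ⟨⟨hyC, hy⟩, hyS⟩ => ?_
  by_contra hyx
  exact hy ⟨⟨hyS, hyC⟩, hyx⟩

theorem nonempty_equiv_of_countable_of_infinite {α : Type*} {A B : Set α} (hA : A.Countable)
    (hA' : A.Infinite) (hB : B.Countable) (hB' : B.Infinite) : Nonempty (A ≃ B) :=
  have := hA.to_subtype; have := hA'.to_subtype
  have := hB.to_subtype; have := hB'.to_subtype
  nonempty_equiv_of_countable

section Sequences

variable {ι : Type*} {a : ι → X}

theorem finite_range_inter_of_tendsto_cocompact (ha : Tendsto a cofinite (cocompact X))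
    {C : Set X} (hC : IsCompact C) : (range a ∩ C).Finite := by
  rw [← image_preimage_eq_range_inter]
  exact (tendsto_cofinite_cocompact_iff.1 ha C hC).image a

theorem infinite_of_tendsto_cocompact (ha : Tendsto a cofinite (cocompact X)) {S : Set X}
    (hS : (a ⁻¹' S).Infinite) : S.Infinite :=
  fun hfin => hS (tendsto_cofinite_cocompact_iff.1 ha S hfin.isCompact)

end Sequences

namespace IsEnd

variable {K Y Z : ℕ → Set X}

theorem isPreconnected (hY : IsEnd K Y) (n : ℕ) : IsPreconnected (Y n) := by
  obtain ⟨x, -, hx⟩ := (hY n).2.1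
  exact hx ▸ isPreconnected_connectedComponentIn

theorem subset_compl (hY : IsEnd K Y) (n : ℕ) : Y n ⊆ (K n)ᶜ := by
  obtain ⟨x, -, hx⟩ := (hY n).2.1
  exact hx ▸ connectedComponentIn_subset _ _

theorem antitone (hY : IsEnd K Y) : Antitone Y :=
  antitone_nat_of_succ_le fun n => (hY n).2.2

theorem subset_of_isPreconnected (hY : IsEnd K Y) {n : ℕ} {T : Set X} (hT : IsPreconnected T)
    (hTK : T ⊆ (K n)ᶜ) (hYT : (Y n ∩ T).Nonempty) : T ⊆ Y n := by
  obtain ⟨x, -, hx⟩ := (hY n).2.1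
  obtain ⟨p, hpY, hpT⟩ := hYT
  rw [hx, connectedComponentIn_eq (hx ▸ hpY)]
  exact hT.subset_connectedComponentIn hpT hTK

theorem disjoint_of_ne (hY : IsEnd K Y) (hZ : IsEnd K Z) {n : ℕ} (hYZ : Y n ≠ Z n) :
    Disjoint (Y n) (Z n) := by
  rw [disjoint_iff_inter_eq_empty, ← not_nonempty_iff_eq_empty]
  refine fun hp => hYZ (Subset.antisymm ?_ ?_)
  · exact hZ.subset_of_isPreconnected (hY.isPreconnected n) (hY.subset_compl n)
      (by rwa [inter_comm])
  · exact hY.subset_of_isPreconnected (hZ.isPreconnected n) (hZ.subset_compl n) hp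

theorem infinite_inter (hY : IsEnd K Y) {a : ℕ → X} (haY : ∀ n, a n ∈ Y n)
    (ha : Tendsto a cofinite (cocompact X)) {S : Set X} (hS : range a ⊆ S) (m : ℕ) :
    (S ∩ Y m).Infinite :=
  infinite_of_tendsto_cocompact ha <|
    (Ici_infinite m).mono fun n hn => ⟨hS (mem_range_self n), hY.antitone hn (haY n)⟩

theorem not_isOneEnded (hY : IsEnd K Y) (hZ : IsEnd K Z) {m : ℕ} (hK : IsCompact (K m))
    (hYZ : Y m ≠ Z m) {S : Set X} (hSY : (S ∩ Y m).Infinite) (hSZ : (S ∩ Z m).Infinite) :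
    ¬ IsOneEnded S := by
  intro hS
  obtain ⟨T, hT, hTK, hST⟩ := hS (K m) hK
  have meets {W : Set X} (hSW : (S ∩ W).Infinite) : (W ∩ T).Nonempty := by
    obtain ⟨p, ⟨hpS, hpW⟩, hpT⟩ := (hSW.sdiff hST).nonempty
    exact ⟨p, hpW, not_not.1 fun h => hpT ⟨hpS, h⟩⟩
  obtain ⟨q, hqZ, hqT⟩ := meets hSZ
  exact (hY.disjoint_of_ne hZ hYZ).notMem_of_mem_right hqZ
    (hY.subset_of_isPreconnected hT hTK (meets hSY) hqT)

variable (K : CompactExhaustion X) {Y : ℕ → Set X}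

theorem exists_tendsto_cocompact (hY : IsEnd K Y) :
    ∃ a : ℕ → X, (∀ n, a n ∈ Y n) ∧ Tendsto a cofinite (cocompact X) := by
  choose a ha using fun n => (hY n).1
  refine ⟨a, ha, tendsto_cofinite_cocompact_iff.2 fun C hC => ?_⟩
  obtain ⟨m, hm⟩ := K.exists_superset_of_isCompact hC
  refine (finite_Iio m).subset fun n hn => ?_
  by_contra hmn
  exact hY.subset_compl n (ha n) (K.subset (not_lt.1 hmn) (hm hn))

theorem isOneEnded_range (hY : IsEnd K Y) {a : ℕ → X} (haY : ∀ n, a n ∈ Y n) :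
    IsOneEnded (range a) := by
  intro C hC
  obtain ⟨m, hm⟩ := K.exists_superset_of_isCompact hC
  refine ⟨Y m, hY.isPreconnected m, (hY.subset_compl m).trans (compl_subset_compl.2 hm), ?_⟩
  refine ((finite_Iio m).image a).subset ?_
  rintro _ ⟨⟨n, rfl⟩, hn⟩
  exact ⟨n, not_le.1 fun hmn => hn (hY.antitone hmn (haY n)), rfl⟩

end IsEnd

end

theorem more_than_one_end_not_discreteHomogeneous_general
    (X : Type*) [TopologicalSpace X] [T2Space X] [LocallyCompactSpace X]
    (K : ℕ → Set X) (hKc : ∀ n, IsCompact (K n))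
    (hKi : ∀ n, K n ⊆ interior (K (n + 1))) (hKu : (⋃ n, K n) = Set.univ)
    (hends : ∃ Y Z : ℕ → Set X, IsEnd K Y ∧ IsEnd K Z ∧ Y ≠ Z) :
    ¬ DiscreteHomogeneous X := by
  intro hDH
  obtain ⟨Y, Z, hY, hZ, hYZ⟩ := hends
  obtain ⟨m, hm⟩ : ∃ m, Y m ≠ Z m := not_forall.1 fun h => hYZ (funext h)
  let K' : CompactExhaustion X := ⟨K, hKc, hKi, hKu⟩
  obtain ⟨a, haY, ha⟩ := hY.exists_tendsto_cocompact K'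
  obtain ⟨c, hcZ, hc⟩ := hZ.exists_tendsto_cocompact K'
  have hAinf : (range a).Infinite := infinite_of_tendsto_cocompact ha (by simpa using infinite_univ)
  have hAdisc : IsDiscreteSubset (range a) :=
    isDiscreteSubset_of_finite_inter_isCompact fun _ => finite_range_inter_of_tendsto_cocompact ha
  have hBdisc : IsDiscreteSubset (range a ∪ range c) :=
    isDiscreteSubset_of_finite_inter_isCompact fun _ hC => by
      rw [union_inter_distrib_right]
      exact (finite_range_inter_of_tendsto_cocompact ha hC).union
        (finite_range_inter_of_tendsto_cocompact hc hC)
  obtain ⟨h, hAB⟩ := hDH _ _ hAdisc hBdisc <| nonempty_equiv_of_countable_of_infinite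
    (countable_range a) hAinf ((countable_range a).union (countable_range c))
    (hAinf.mono subset_union_left)
  have hBone : IsOneEnded (range a ∪ range c) := hAB ▸ (hY.isOneEnded_range K' haY).image h
  exact hY.not_isOneEnded hZ (hKc m) hm (hY.infinite_inter haY ha subset_union_left m)
    (hZ.infinite_inter hcZ hc subset_union_right m) hBone

theorem more_than_one_end_not_discreteHomogeneous
    (X : Type*) [TopologicalSpace X] [T2Space X] [LocallyCompactSpace X]
    [SigmaCompactSpace X] [ConnectedSpace X] [LocallyConnectedSpace X]
    (hnc : ¬ CompactSpace X)
    (K : ℕ → Set X) (hKc : ∀ n, IsCompact (K n))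
    (hKi : ∀ n, K n ⊆ interior (K (n + 1))) (hKu : (⋃ n, K n) = Set.univ)
    (hends : ∃ Y Z : ℕ → Set X, IsEnd K Y ∧ IsEnd K Z ∧ Y ≠ Z) :
    ¬ DiscreteHomogeneous X :=
  more_than_one_end_not_discreteHomogeneous_general X K hKc hKi hKu hends
end

section
/- The 2-manifold ℝ × S¹ (the open cylinder) is not discrete homogeneous. -/
/-!
Let `h` be a self-homeomorphism of `ℝ × K` (`K` compact, connected, nonempty) and let `A` have
first coordinates `≥ a`. The compact set `h ({a} × K)` lies in a band `[-R, R] × K`, and each of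
the two connected ends `{t > R}` and `{t < -R}` lies in `h {t < a}` or in `h {t > a}`. If `h A`
reaches both ends, neither end can lie in `h {t < a}`, which misses `h A`; so `h {t < a}` is
trapped in the compact band, which is absurd. Hence `h` cannot map `{(n, 1) : n ∈ ℕ}` onto
`{(m, 1) : m ∈ ℤ}`.
-/

open Set Function

section Discrete

variable {X Y : Type*} [TopologicalSpace X] [TopologicalSpace Y]

theorem IsDiscreteSubset.mono {A B : Set X} (hB : IsDiscreteSubset B) (hAB : A ⊆ B) :
    IsDiscreteSubset A := fun x =>
  let ⟨U, hU, hUB⟩ := hB x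
  ⟨U, hU, hUB.anti (inter_subset_inter_right U hAB)⟩

theorem IsDiscreteSubset.of_image {f : X → Y} {A : Set X} (hf : Continuous f) (hA : InjOn f A)
    (h : IsDiscreteSubset (f '' A)) : IsDiscreteSubset A := fun x => by
  obtain ⟨U, hU, hUA⟩ := h (f x)
  refine ⟨f ⁻¹' U, hf.continuousAt hU, fun y hy z hz => hA hy.2 hz.2 ?_⟩
  exact hUA ⟨hy.1, mem_image_of_mem f hy.2⟩ ⟨hz.1, mem_image_of_mem f hz.2⟩

end Discrete

theorem isDiscreteSubset_range_intCast : IsDiscreteSubset (range ((↑) : ℤ → ℝ)) := by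
  intro x
  refine ⟨Metric.ball x (1 / 2), Metric.ball_mem_nhds x (by norm_num), ?_⟩
  rintro _ ⟨hm, m, rfl⟩ _ ⟨hn, n, rfl⟩
  by_contra hmn
  have h1 : 1 ≤ dist m n := Int.pairwise_one_le_dist fun h => hmn (congrArg _ h)
  have h2 : dist (m : ℝ) n < 1 := by
    linarith [dist_triangle_right (m : ℝ) n x, Metric.mem_ball.mp hm, Metric.mem_ball.mp hn]
  rw [Int.dist_cast_real] at h2
  exact h2.not_ge h1

theorem not_bddAbove_range_intCast : ¬ BddAbove (range ((↑) : ℤ → ℝ)) :=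
  not_bddAbove_iff.mpr fun x =>
    let ⟨n, hn⟩ := exists_int_gt x
    ⟨n, mem_range_self n, hn⟩

theorem not_bddBelow_range_intCast : ¬ BddBelow (range ((↑) : ℤ → ℝ)) :=
  not_bddBelow_iff.mpr fun x =>
    let ⟨n, hn⟩ := exists_int_lt x
    ⟨n, mem_range_self n, hn⟩

section Cylinder

variable {K : Type*} [TopologicalSpace K]

theorem isPreconnected_fst_preimage [PreconnectedSpace K] {X : Type*} [TopologicalSpace X]
    {s : Set X} (hs : IsPreconnected s) : IsPreconnected (Prod.fst ⁻¹' s : Set (X × K)) := by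
  rw [← prod_univ]
  exact hs.prod isPreconnected_univ

theorem IsCompact.exists_subset_fst_preimage_Icc {S : Set (ℝ × K)} (hS : IsCompact S) :
    ∃ R, S ⊆ Prod.fst ⁻¹' Icc (-R) R := by
  obtain ⟨R, hR⟩ := hS.exists_bound_of_continuousOn continuous_fst.continuousOn
  exact ⟨R, fun x hx => abs_le.mp (hR x hx)⟩

theorem Homeomorph.subset_image_fst_preimage_Ioi (h : ℝ × K ≃ₜ ℝ × K) {a : ℝ}
    {A E : Set (ℝ × K)} (hA : A ⊆ Prod.fst ⁻¹' Ici a) (hE : IsPreconnected E)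
    (hEa : Disjoint E (h '' (Prod.fst ⁻¹' {a}))) (hEA : (E ∩ h '' A).Nonempty) :
    E ⊆ h '' (Prod.fst ⁻¹' Ioi a) := by
  have hcover : E ⊆ h '' (Prod.fst ⁻¹' Iio a) ∪ h '' (Prod.fst ⁻¹' Ioi a) := by
    rw [← image_union, ← preimage_union, Iio_union_Ioi, preimage_compl,
      image_compl_eq h.bijective]
    exact hEa.subset_compl_right
  have hdisj : Disjoint (h '' (Prod.fst ⁻¹' Iio a)) (h '' (Prod.fst ⁻¹' Ioi a)) :=
    (disjoint_image_iff h.injective).mpr (Iio_disjoint_Ioi_same.preimage _)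
  have hAa : Disjoint (h '' A) (h '' (Prod.fst ⁻¹' Iio a)) :=
    (disjoint_image_iff h.injective).mpr
      (((Iio_disjoint_Ici le_rfl).symm.preimage _).mono_left hA)
  refine (hE.subset_or_subset (h.isOpenMap _ (isOpen_Iio.preimage continuous_fst))
    (h.isOpenMap _ (isOpen_Ioi.preimage continuous_fst)) hdisj hcover).resolve_left ?_
  obtain ⟨x, hxE, hxA⟩ := hEA
  exact fun hEU => disjoint_left.mp hAa hxA (hEU hxE)

theorem Homeomorph.bddAbove_or_bddBelow_image_fst [CompactSpace K] [PreconnectedSpace K]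
    [Nonempty K] (h : ℝ × K ≃ₜ ℝ × K) {A : Set (ℝ × K)}
    (hA : BddBelow (Prod.fst '' A)) :
    BddAbove (Prod.fst '' (h '' A)) ∨ BddBelow (Prod.fst '' (h '' A)) := by
  by_contra! ⟨hup, hdown⟩
  obtain ⟨a, ha⟩ := hA
  obtain ⟨R, hR⟩ := IsCompact.exists_subset_fst_preimage_Icc
    (((isCompact_singleton (x := a)).prod (isCompact_univ (X := K))).image h.continuous)
  rw [prod_univ] at hR
  have hend : ∀ E, IsPreconnected E → Disjoint E (Prod.fst ⁻¹' Icc (-R) R) →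
      (E ∩ h '' A).Nonempty → E ⊆ h '' (Prod.fst ⁻¹' Ioi a) := fun E hE hER hEA =>
    h.subset_image_fst_preimage_Ioi (fun x hx => ha (mem_image_of_mem _ hx)) hE
      (hER.mono_right hR) hEA
  obtain ⟨_, ⟨y, hy, rfl⟩, hRy⟩ := not_bddAbove_iff.mp hup R
  obtain ⟨_, ⟨z, hz, rfl⟩, hzR⟩ := not_bddBelow_iff.mp hdown (-R)
  have hplus := hend _ (isPreconnected_fst_preimage isPreconnected_Ioi)
    (((Iic_disjoint_Ioi le_rfl).mono_left Icc_subset_Iic_self).symm.preimage _) ⟨y, hRy, hy⟩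
  have hminus := hend _ (isPreconnected_fst_preimage isPreconnected_Iio)
    (((Iio_disjoint_Ici le_rfl).mono_right Icc_subset_Ici_self).preimage _) ⟨z, hzR, hz⟩
  have hband : Prod.fst ⁻¹' Iio a ⊆ h ⁻¹' (Prod.fst ⁻¹' Icc (-R) R) := by
    intro x hx
    have hout : h x ∉ h '' (Prod.fst ⁻¹' Ioi a) := by
      rintro ⟨w, hw, hwx⟩
      rw [h.injective hwx] at hw
      exact lt_asymm (show x.1 < a from hx) hw
    exact ⟨not_lt.mp fun hlt => hout (hminus hlt), not_lt.mp fun hlt => hout (hplus hlt)⟩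
  have hcpt : IsCompact (h ⁻¹' (Prod.fst ⁻¹' Icc (-R) R)) := by
    rw [h.isCompact_preimage, ← prod_univ]
    exact isCompact_Icc.prod isCompact_univ
  obtain ⟨k⟩ := ‹Nonempty K›
  refine not_bddBelow_Iio a ((hcpt.image continuous_fst).bddBelow.mono fun t ht => ?_)
  exact ⟨(t, k), hband ht, rfl⟩

end Cylinder

/-- The open cylinder `ℝ × S¹` is not discrete homogeneous. -/
theorem cylinder_not_discreteHomogeneous :
    ¬ DiscreteHomogeneous (ℝ × Circle) := by
  intro H
  let a : ℕ → ℝ × Circle := fun n => (n, 1)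
  let b : ℤ → ℝ × Circle := fun m => (m, 1)
  have ha : Injective a := fun _ _ h => Nat.cast_injective (congrArg Prod.fst h)
  have hb : Injective (Prod.fst ∘ b) := Int.cast_injective
  have hfst : Prod.fst '' range b = range ((↑) : ℤ → ℝ) := (range_comp _ _).symm
  have hB : IsDiscreteSubset (range b) :=
    .of_image continuous_fst hb.injOn_range (hfst ▸ isDiscreteSubset_range_intCast)
  have hAB : range a ⊆ range b := fun _ ⟨n, hn⟩ => ⟨n, by simp [a, b, ← hn]⟩
  obtain ⟨h, hh⟩ := H _ _ (hB.mono hAB) hB ⟨(Equiv.ofInjective a ha).symm.trans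
    ((Denumerable.eqv ℤ).symm.trans (Equiv.ofInjective b hb.of_comp))⟩
  have hA : BddBelow (Prod.fst '' range a) := by
    refine ⟨0, ?_⟩
    rintro _ ⟨_, ⟨n, rfl⟩, rfl⟩
    exact n.cast_nonneg
  rcases h.bddAbove_or_bddBelow_image_fst hA with hbdd | hbdd <;> rw [hh, hfst] at hbdd
  exacts [not_bddAbove_range_intCast hbdd, not_bddBelow_range_intCast hbdd]
end
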